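/- The Rademacher complexity of the class of linear functionals {x ↦ Tr(Ex) : ‖E‖_∞ ≤ 1} evaluated on any n points of the Schatten-1 unit ball satisfies √n·R_n ≤ E‖∑_{i=1}^n γ_i x_i‖₁ ≤ C√(nd), i.e. R_n = O(√d). -/

import Mathlib

/-- Trace norm (Schatten 1-norm) of a Hermitian matrix. -/
noncomputable def traceNorm {d : ℕ} (A : Matrix (Fin d) (Fin d) ℂ) : ℝ :=
  if hA : A.IsHermitian then ∑ i, |hA.eigenvalues i| else 0

/-- Operator norm (Schatten ∞-norm) of a Hermitian matrix. -/
noncomputable def opNorm {d : ℕ} (A : Matrix (Fin d) (Fin d) ℂ) : ℝ :=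
  if hA : A.IsHermitian then ⨆ i, |hA.eigenvalues i| else 0

open Matrix Finset


lemma diag_entry_bound {d : ℕ} (W : Matrix (Fin d) (Fin d) ℂ)
    (hW : W ∈ Matrix.unitaryGroup (Fin d) ℂ) (μ : Fin d → ℝ) (i : Fin d) :
    ‖(star W * Matrix.diagonal (fun k => (μ k : ℂ)) * W) i i‖ ≤ ⨆ k, |μ k| := by
  have hWW : star W * W = 1 := (Matrix.mem_unitaryGroup_iff'.mp hW)
  have hsum : ∑ k, ‖W k i‖ ^ 2 = 1 := by
    have h1 : (star W * W) i i = (1 : Matrix (Fin d) (Fin d) ℂ) i i := by rw [hWW]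
    have h2 : ∑ k, (‖W k i‖ ^ 2 : ℂ) = 1 := by
      simpa [Matrix.mul_apply, Matrix.one_apply, Matrix.star_apply, RCLike.conj_mul] using h1
    exact_mod_cast h2
  have hentry : (star W * Matrix.diagonal (fun k => (μ k : ℂ)) * W) i i
      = ∑ k, (μ k : ℂ) * (‖W k i‖ ^ 2 : ℝ) := by
    rw [Matrix.mul_assoc, Matrix.mul_apply]
    refine Finset.sum_congr rfl fun k _ => ?_
    rw [Matrix.diagonal_mul, Matrix.star_apply]
    rw [Complex.star_def, mul_comm ((μ k : ℂ)) (W k i), ← mul_assoc,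
      mul_comm ((starRingEnd ℂ) (W k i)) (W k i), Complex.mul_conj']
    push_cast
    ring
  rw [hentry]
  calc ‖∑ k, (μ k : ℂ) * (‖W k i‖ ^ 2 : ℝ)‖ ≤ ∑ k, ‖(μ k : ℂ) * (‖W k i‖ ^ 2 : ℝ)‖ :=
        norm_sum_le _ _
    _ ≤ ∑ k, (⨆ j, |μ j|) * ‖W k i‖ ^ 2 := by
        refine Finset.sum_le_sum fun k _ => ?_
        rw [norm_mul, Complex.norm_real, Complex.norm_real, Real.norm_eq_abs, Real.norm_eq_abs,
          abs_of_nonneg (by positivity : (0:ℝ) ≤ ‖W k i‖ ^ 2)]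
        exact mul_le_mul_of_nonneg_right
          (le_ciSup (Set.Finite.bddAbove (Set.finite_range fun j => |μ j|)) k) (by positivity)
    _ = ⨆ j, |μ j| := by rw [← Finset.mul_sum, hsum, mul_one]

lemma entry_bound {d : ℕ} {E : Matrix (Fin d) (Fin d) ℂ} (hE : E.IsHermitian)
    (U : Matrix (Fin d) (Fin d) ℂ) (hU : U ∈ Matrix.unitaryGroup (Fin d) ℂ) (i : Fin d) :
    ‖(star U * E * U) i i‖ ≤ opNorm E := by
  have hV := hE.eigenvectorUnitary.2
  set V : Matrix (Fin d) (Fin d) ℂ := (hE.eigenvectorUnitary : Matrix (Fin d) (Fin d) ℂ) with hVdef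
  have hW : star V * U ∈ Matrix.unitaryGroup (Fin d) ℂ := by
    exact Submonoid.mul_mem _ (Unitary.star_mem hV) hU
  have hkey : star U * E * U = star (star V * U) *
      Matrix.diagonal (fun k => ((hE.eigenvalues k : ℝ) : ℂ)) * (star V * U) := by
    conv_lhs => rw [hE.spectral_theorem]
    simp only [Unitary.conjStarAlgAut_apply, StarMul.star_mul, star_star, Matrix.mul_assoc, ← hVdef]
    rfl
  rw [hkey, opNorm, dif_pos hE]
  exact diag_entry_bound _ hW _ i

lemma trace_duality {d : ℕ} {E S : Matrix (Fin d) (Fin d) ℂ}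
    (hE : E.IsHermitian) (hS : S.IsHermitian) (hEle : opNorm E ≤ 1) :
    |(Matrix.trace (E * S)).re| ≤ traceNorm S := by
  have hU := hS.eigenvectorUnitary.2
  set U : Matrix (Fin d) (Fin d) ℂ := (hS.eigenvectorUnitary : Matrix (Fin d) (Fin d) ℂ) with hUdef
  have htr : Matrix.trace (E * S)
      = ∑ i, (star U * E * U) i i * ((hS.eigenvalues i : ℝ) : ℂ) := by
    conv_lhs => rw [hS.spectral_theorem, Unitary.conjStarAlgAut_apply]
    rw [← Matrix.mul_assoc, ← Matrix.mul_assoc, Matrix.trace_mul_comm, ← Matrix.mul_assoc,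
      ← Matrix.mul_assoc]
    rw [Matrix.trace]
    refine Finset.sum_congr rfl fun i _ => ?_
    rw [Matrix.diag_apply, Matrix.mul_diagonal]
    rfl
  rw [traceNorm, dif_pos hS, htr]
  calc |(∑ i, (star U * E * U) i i * ((hS.eigenvalues i : ℝ) : ℂ)).re|
      ≤ ‖∑ i, (star U * E * U) i i * ((hS.eigenvalues i : ℝ) : ℂ)‖ := Complex.abs_re_le_norm _
    _ ≤ ∑ i, ‖(star U * E * U) i i * ((hS.eigenvalues i : ℝ) : ℂ)‖ := norm_sum_le _ _
    _ ≤ ∑ i, |hS.eigenvalues i| := by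
        refine Finset.sum_le_sum fun i _ => ?_
        rw [norm_mul, Complex.norm_real, Real.norm_eq_abs]
        calc ‖(star U * E * U) i i‖ * |hS.eigenvalues i|
            ≤ 1 * |hS.eigenvalues i| := by
              exact mul_le_mul_of_nonneg_right ((entry_bound hE U hU i).trans hEle) (abs_nonneg _)
          _ = |hS.eigenvalues i| := one_mul _


lemma re_trace_sq {d : ℕ} {A : Matrix (Fin d) (Fin d) ℂ} (hA : A.IsHermitian) :
    (Matrix.trace (A * A)).re = ∑ i, (hA.eigenvalues i) ^ 2 := by
  have hU := hA.eigenvectorUnitary.2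
  set U : Matrix (Fin d) (Fin d) ℂ := (hA.eigenvectorUnitary : Matrix (Fin d) (Fin d) ℂ)
  have hUU : U * star U = 1 := Matrix.mem_unitaryGroup_iff.mp hU
  have h1 : star U * A * U = Matrix.diagonal (RCLike.ofReal ∘ hA.eigenvalues) :=
    by rw [← hA.conjStarAlgAut_star_eigenvectorUnitary, Unitary.conjStarAlgAut_star_apply]
  have h2 : (star U * A * U) * (star U * A * U) = star U * (A * A) * U := by
    simp only [Matrix.mul_assoc]
    rw [← Matrix.mul_assoc U (star U) (A * U), hUU, Matrix.one_mul]
  have h3 : Matrix.trace (A * A) = Matrix.trace (star U * (A * A) * U) := by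
    rw [Matrix.trace_mul_cycle, ← Matrix.mul_assoc, hUU, Matrix.one_mul]
  rw [h3, ← h2, h1, Matrix.diagonal_mul_diagonal, Matrix.trace_diagonal]
  simp only [Pi.mul_apply, Function.comp_apply]
  rw [Complex.re_sum]
  refine Finset.sum_congr rfl fun i _ => ?_
  simp [← Complex.ofReal_mul, sq]

lemma sgn_orth {n : ℕ} (i j : Fin n) (hij : i ≠ j) :
    ∑ s : Fin n → Bool, ((if s i then (1:ℝ) else -1) * (if s j then (1:ℝ) else -1)) = 0 := by
  have hf : Function.Involutive (fun s : Fin n → Bool => Function.update s j (!(s j))) := by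
    intro s; funext k
    rcases eq_or_ne k j with rfl | hk
    · simp
    · simp [Function.update_of_ne hk]
  have he : ∑ s : Fin n → Bool,
      ((if Function.update s j (!(s j)) i then (1:ℝ) else -1) *
        (if Function.update s j (!(s j)) j then (1:ℝ) else -1))
      = ∑ s : Fin n → Bool, ((if s i then (1:ℝ) else -1) * (if s j then (1:ℝ) else -1)) :=
    hf.bijective.sum_comp (fun t => (if t i then (1:ℝ) else -1) * (if t j then (1:ℝ) else -1))
  have hneg : ∀ s : Fin n → Bool,
      ((if Function.update s j (!(s j)) i then (1:ℝ) else -1) *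
        (if Function.update s j (!(s j)) j then (1:ℝ) else -1))
      = -((if s i then (1:ℝ) else -1) * (if s j then (1:ℝ) else -1)) := by
    intro s
    rw [Function.update_of_ne hij, Function.update_self]
    cases s j <;> cases s i <;> norm_num
  rw [Finset.sum_congr rfl (fun s _ => hneg s), Finset.sum_neg_distrib] at he
  linarith

lemma sum_q {d n : ℕ} (x : Fin n → Matrix (Fin d) (Fin d) ℂ) :
    ∑ s : Fin n → Bool,
      (Matrix.trace ((∑ i, (if s i then (1:ℝ) else -1) • x i) *
        (∑ i, (if s i then (1:ℝ) else -1) • x i))).re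
      = 2 ^ n * ∑ i, (Matrix.trace (x i * x i)).re := by
  have hexp : ∀ s : Fin n → Bool,
      (Matrix.trace ((∑ i, (if s i then (1:ℝ) else -1) • x i) *
        (∑ i, (if s i then (1:ℝ) else -1) • x i))).re
      = ∑ i, ∑ j, ((if s i then (1:ℝ) else -1) * (if s j then (1:ℝ) else -1)) *
          (Matrix.trace (x i * x j)).re := by
    intro s
    rw [Finset.sum_mul_sum]
    simp only [smul_mul_assoc, mul_smul_comm, smul_smul, Matrix.trace_sum, Matrix.trace_smul,
      Complex.re_sum, Complex.smul_re, smul_eq_mul]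
    rw [Finset.sum_comm]
    exact Finset.sum_congr rfl fun i _ => Finset.sum_congr rfl fun j _ => by rw [Matrix.trace_mul_comm]
  rw [Finset.sum_congr rfl fun s _ => hexp s]
  rw [Finset.sum_comm]
  have hswap : ∀ i : Fin n, ∑ s : Fin n → Bool, ∑ j,
      ((if s i then (1:ℝ) else -1) * (if s j then (1:ℝ) else -1)) *
        (Matrix.trace (x i * x j)).re
      = 2 ^ n * (Matrix.trace (x i * x i)).re := by
    intro i
    rw [Finset.sum_comm]
    rw [Finset.sum_eq_single_of_mem i (Finset.mem_univ i)]
    · have h1 : ∀ s : Fin n → Bool,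
          ((if s i then (1:ℝ) else -1) * (if s i then (1:ℝ) else -1)) *
            (Matrix.trace (x i * x i)).re = (Matrix.trace (x i * x i)).re := by
        intro s; cases hsi : s i <;> simp
      rw [Finset.sum_congr rfl fun s _ => h1 s, Finset.sum_const, nsmul_eq_mul,
        Finset.card_univ, Fintype.card_fun, Fintype.card_bool, Fintype.card_fin]
      push_cast
      ring
    · intro j _ hji
      rw [← Finset.sum_mul, sgn_orth i j (Ne.symm hji), zero_mul]
  rw [Finset.sum_congr rfl fun i _ => hswap i, ← Finset.mul_sum]

lemma traceNorm_nonneg {d : ℕ} (A : Matrix (Fin d) (Fin d) ℂ) : 0 ≤ traceNorm A := by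
  unfold traceNorm
  split
  · exact Finset.sum_nonneg fun i _ => abs_nonneg _
  · exact le_refl 0

/-- For x_1,…,x_n in the Schatten-1 unit ball of d×d Hermitian
matrices, the Rademacher complexity R_n of the class {x ↦ Tr(Ex) : ‖E‖_∞ ≤ 1}
satisfies √n·R_n ≤ E‖∑ γ_i x_i‖₁ ≤ C√(nd) for an absolute constant C;
i.e. R_n = O(√d). Expectation is the average over all sign vectors. -/
theorem stmt_12 :
    ∃ C : ℝ, 0 < C ∧ ∀ (d n : ℕ) (x : Fin n → Matrix (Fin d) (Fin d) ℂ),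
      (∀ i, (x i).IsHermitian) → (∀ i, traceNorm (x i) ≤ 1) →
      Real.sqrt n *
          ((∑ s : Fin n → Bool, sSup {r : ℝ |
              ∃ E : Matrix (Fin d) (Fin d) ℂ, E.IsHermitian ∧ opNorm E ≤ 1 ∧
                r = |(Real.sqrt n)⁻¹ *
                    ∑ i, (if s i then (1 : ℝ) else -1) * (Matrix.trace (E * x i)).re|})
            / 2 ^ n)
        ≤ (∑ s : Fin n → Bool,
            traceNorm (∑ i, (if s i then (1 : ℝ) else -1) • x i)) / 2 ^ n ∧
      (∑ s : Fin n → Bool,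
          traceNorm (∑ i, (if s i then (1 : ℝ) else -1) • x i)) / 2 ^ n
        ≤ C * Real.sqrt ((n : ℝ) * d) := by
  refine ⟨1, one_pos, fun d n x hherm hnorm => ?_⟩
  set S : (Fin n → Bool) → Matrix (Fin d) (Fin d) ℂ :=
    fun s => ∑ i, (if s i then (1:ℝ) else -1) • x i with hSdef
  have hSh : ∀ s, (S s).IsHermitian := by
    intro s
    show (S s)ᴴ = S s
    rw [hSdef]
    simp only [Matrix.conjTranspose_sum, Matrix.conjTranspose_smul, star_trivial]
    exact Finset.sum_congr rfl fun i _ => by rw [hherm i]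
  constructor
  · -- first inequality
    have key1 : ∀ s, Real.sqrt n * sSup {r : ℝ |
        ∃ E : Matrix (Fin d) (Fin d) ℂ, E.IsHermitian ∧ opNorm E ≤ 1 ∧
          r = |(Real.sqrt n)⁻¹ *
              ∑ i, (if s i then (1 : ℝ) else -1) * (Matrix.trace (E * x i)).re|}
        ≤ traceNorm (S s) := by
      intro s
      rcases Nat.eq_zero_or_pos n with hn | hn
      · have h0 : Real.sqrt (n : ℝ) = 0 := by rw [hn]; simp
        rw [h0, zero_mul]
        exact traceNorm_nonneg _
      · have hsq : (0:ℝ) < Real.sqrt n := Real.sqrt_pos.mpr (by positivity)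
        have hsup : sSup {r : ℝ |
            ∃ E : Matrix (Fin d) (Fin d) ℂ, E.IsHermitian ∧ opNorm E ≤ 1 ∧
              r = |(Real.sqrt n)⁻¹ *
                  ∑ i, (if s i then (1 : ℝ) else -1) * (Matrix.trace (E * x i)).re|}
            ≤ (Real.sqrt n)⁻¹ * traceNorm (S s) := by
          apply Real.sSup_le
          · rintro r ⟨E, hE, hEle, rfl⟩
            have hts : ∑ i, (if s i then (1:ℝ) else -1) * (Matrix.trace (E * x i)).re
                = (Matrix.trace (E * S s)).re := by
              rw [hSdef, Matrix.mul_sum, Matrix.trace_sum, Complex.re_sum]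
              exact Finset.sum_congr rfl fun i _ => by
                rw [mul_smul_comm, Matrix.trace_smul, Complex.smul_re, smul_eq_mul]
            rw [hts, abs_mul, abs_inv, abs_of_nonneg (Real.sqrt_nonneg _)]
            exact mul_le_mul_of_nonneg_left (trace_duality hE (hSh s) hEle)
              (inv_nonneg.mpr (Real.sqrt_nonneg _))
          · exact mul_nonneg (inv_nonneg.mpr (Real.sqrt_nonneg _)) (traceNorm_nonneg _)
        refine le_trans (mul_le_mul_of_nonneg_left hsup hsq.le) (le_of_eq ?_)
        field_simp
    rw [mul_div_assoc', Finset.mul_sum]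
    gcongr with s _
    exact key1 s
  · -- second inequality
    have hq0 : ∀ s, (0:ℝ) ≤ (Matrix.trace (S s * S s)).re := by
      intro s
      rw [re_trace_sq (hSh s)]
      exact Finset.sum_nonneg fun i _ => sq_nonneg _
    have htn : ∀ s, traceNorm (S s) ≤ Real.sqrt (d * (Matrix.trace (S s * S s)).re) := by
      intro s
      apply Real.le_sqrt_of_sq_le
      rw [traceNorm, dif_pos (hSh s), re_trace_sq (hSh s)]
      calc (∑ i, |(hSh s).eigenvalues i|) ^ 2
          ≤ (Finset.univ.card : ℝ) * ∑ i, |(hSh s).eigenvalues i| ^ 2 :=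
            sq_sum_le_card_mul_sum_sq
        _ = d * ∑ i, ((hSh s).eigenvalues i) ^ 2 := by
            simp [Finset.card_univ, sq_abs]
    have hCS : ∑ s : Fin n → Bool, Real.sqrt (d * (Matrix.trace (S s * S s)).re)
        ≤ Real.sqrt ((2:ℝ) ^ n * ∑ s : Fin n → Bool, d * (Matrix.trace (S s * S s)).re) := by
      apply Real.le_sqrt_of_sq_le
      calc (∑ s : Fin n → Bool, Real.sqrt (d * (Matrix.trace (S s * S s)).re)) ^ 2
          ≤ (Finset.univ.card : ℝ) *
            ∑ s : Fin n → Bool, Real.sqrt (d * (Matrix.trace (S s * S s)).re) ^ 2 :=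
            sq_sum_le_card_mul_sum_sq
        _ = (2:ℝ) ^ n * ∑ s : Fin n → Bool, d * (Matrix.trace (S s * S s)).re := by
            rw [Finset.card_univ, Fintype.card_fun, Fintype.card_bool, Fintype.card_fin]
            push_cast
            congr 1
            exact Finset.sum_congr rfl fun s _ =>
              Real.sq_sqrt (mul_nonneg (Nat.cast_nonneg d) (hq0 s))
    have hqsum : ∑ s : Fin n → Bool, d * (Matrix.trace (S s * S s)).re
        ≤ d * (2 ^ n * n) := by
      rw [← Finset.mul_sum, hSdef, sum_q x]
      have hone : ∀ i, (Matrix.trace (x i * x i)).re ≤ 1 := by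
        intro i
        rw [re_trace_sq (hherm i)]
        have h1 : ∑ j, ((hherm i).eigenvalues j) ^ 2 ≤ (∑ j, |(hherm i).eigenvalues j|) ^ 2 := by
          have := sum_sq_le_sq_sum_of_nonneg
            (f := fun j => |(hherm i).eigenvalues j|) (s := Finset.univ)
            (fun j _ => abs_nonneg _)
          simpa [sq_abs] using this
        have h2 : (∑ j, |(hherm i).eigenvalues j|) ≤ 1 := by
          have := hnorm i
          rwa [traceNorm, dif_pos (hherm i)] at this
        have h3 : (∑ j, |(hherm i).eigenvalues j|) ^ 2 ≤ 1 := by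
          nlinarith [Finset.sum_nonneg (fun j (_ : j ∈ Finset.univ) =>
            abs_nonneg ((hherm i).eigenvalues j))]
        linarith
      have : ∑ i, (Matrix.trace (x i * x i)).re ≤ n := by
        calc ∑ i, (Matrix.trace (x i * x i)).re ≤ ∑ _i : Fin n, (1:ℝ) :=
              Finset.sum_le_sum fun i _ => hone i
          _ = n := by simp
      gcongr
    have hfin : ∑ s : Fin n → Bool, Real.sqrt (d * (Matrix.trace (S s * S s)).re)
        ≤ Real.sqrt ((2:ℝ) ^ n * (d * (2 ^ n * n))) :=
      hCS.trans (Real.sqrt_le_sqrt (mul_le_mul_of_nonneg_left hqsum (by positivity)))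
    show (∑ s : Fin n → Bool, traceNorm (S s)) / 2 ^ n ≤ 1 * Real.sqrt ((n : ℝ) * d)
    calc (∑ s : Fin n → Bool, traceNorm (S s)) / 2 ^ n
        ≤ (∑ s : Fin n → Bool, Real.sqrt (d * (Matrix.trace (S s * S s)).re)) / 2 ^ n := by
          gcongr with s _
          exact htn s
      _ ≤ Real.sqrt ((2:ℝ) ^ n * (d * (2 ^ n * n))) / 2 ^ n := by gcongr
      _ = 1 * Real.sqrt ((n : ℝ) * d) := by
          rw [show (2:ℝ) ^ n * (d * (2 ^ n * n)) = ((2:ℝ) ^ n) ^ 2 * (n * d) by ring,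
            Real.sqrt_mul (sq_nonneg _), Real.sqrt_sq (by positivity)]
          field_simp
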